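/- Let U, V, U₊, V₊, U₋, V₋ be positive definite d×d matrices with V₊^{1/2} U₊ V₊^{1/2} ≤ X·I, V₋^{1/2} U₋ V₋^{1/2} ≤ X·I, V^{1/2} U V^{1/2} ≤ X·I, and U = (U₊+U₋)/2, V = (V₊+V₋)/2. Then for every θ ∈ [0,1], the convex combination Uθ = θU₊ + (1−θ)U₋ and Vθ = θV₊ + (1−θ)V₋ satisfies Vθ^{1/2} Uθ Vθ^{1/2} ≤ 4X·I. -/

import Mathlib

/-! With `T = V^{1/2}`, the hypothesis `T U T ≤ X` says `U ≤ X V⁻¹`, and positivity of the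
endpoints gives `Uθ ≤ 2U` and `Vθ ≤ 2V`. Hence `S Uθ S ≤ 2X · S V⁻¹ S = 2X · a⋆a` with
`a = T⁻¹ S`, and `‖a⋆a‖ = ‖a a⋆‖ = ‖T⁻¹ Vθ T⁻¹‖ ≤ 2`. Only the C⋆-identity and monotonicity
of conjugation are used. -/

open scoped ComplexOrder Matrix

/-- The positive semidefinite square root of a positive semidefinite matrix
(the definition removed from Mathlib, restored with its old meaning). -/
noncomputable def Matrix.PosSemidef.sqrt {n 𝕜 : Type*} [Fintype n] [DecidableEq n] [RCLike 𝕜]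
    {A : Matrix n n 𝕜} (hA : A.PosSemidef) : Matrix n n 𝕜 :=
  hA.1.eigenvectorUnitary.1 * Matrix.diagonal ((↑) ∘ (√·) ∘ hA.1.eigenvalues) *
    (star hA.1.eigenvectorUnitary : Matrix n n 𝕜)

section CStarAlgebra

variable {A : Type*} [CStarAlgebra A] [PartialOrder A] [StarOrderedRing A]

theorem star_mul_self_le_algebraMap_iff {a : A} {r : ℝ} (hr : 0 ≤ r) :
    star a * a ≤ algebraMap ℝ A r ↔ a * star a ≤ algebraMap ℝ A r := by
  rw [← CStarAlgebra.norm_le_iff_le_algebraMap _ hr (star_mul_self_nonneg a),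
    ← CStarAlgebra.norm_le_iff_le_algebraMap _ hr (mul_star_self_nonneg a),
    CStarRing.norm_star_mul_self, CStarRing.norm_self_mul_star]

variable {t w : A}

theorem le_smul_mul_star_of_conj_le (ht : IsSelfAdjoint t) (hwt : w * t = 1) {u : A} {c : ℝ}
    (h : t * u * t ≤ algebraMap ℝ A c) : u ≤ c • (w * star w) := by
  have htw : t * star w = 1 := by rw [← ht.star_eq, ← star_mul, hwt, star_one]
  calc u = w * (t * u * t) * star w := by
        simp only [← mul_assoc, hwt, one_mul]
        rw [mul_assoc, htw, mul_one]
    _ ≤ w * algebraMap ℝ A c * star w := star_right_conjugate_le_conjugate h w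
    _ = c • (w * star w) := by
        rw [Algebra.algebraMap_eq_smul_one, mul_smul_comm, smul_mul_assoc, mul_one]

theorem star_conj_mul_star_le_of_mul_star_le (ht : IsSelfAdjoint t) (htw : t * w = 1) {s : A}
    {b : ℝ} (hb : 0 ≤ b) (hs : s * star s ≤ b • (t * t)) :
    star s * (w * star w) * s ≤ algebraMap ℝ A b := by
  have hwt : star w * t = 1 := by rw [← ht.star_eq, ← star_mul, htw, star_one]
  have key : star w * s * star (star w * s) ≤ algebraMap ℝ A b :=
    calc star w * s * star (star w * s) = star w * (s * star s) * w := by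
          simp only [star_mul, star_star, mul_assoc]
      _ ≤ star w * (b • (t * t)) * w := star_left_conjugate_le_conjugate hs w
      _ = algebraMap ℝ A b := by
          rw [mul_smul_comm, smul_mul_assoc, ← mul_assoc, hwt, one_mul, htw,
            Algebra.algebraMap_eq_smul_one]
  rw [← star_mul_self_le_algebraMap_iff hb] at key
  simpa only [star_mul, star_star, mul_assoc] using key

theorem star_conj_le_algebraMap_of_le_smul (ht : IsSelfAdjoint t) (hwt : w * t = 1)
    (htw : t * w = 1) {u u' s : A} {X a b : ℝ} (hX : 0 ≤ X) (ha : 0 ≤ a) (hb : 0 ≤ b)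
    (h : t * u * t ≤ algebraMap ℝ A X) (hu : u' ≤ a • u) (hs : s * star s ≤ b • (t * t)) :
    star s * u' * s ≤ algebraMap ℝ A (a * b * X) :=
  calc star s * u' * s ≤ star s * (a • X • (w * star w)) * s :=
        star_left_conjugate_le_conjugate
          (hu.trans (smul_le_smul_of_nonneg_left (le_smul_mul_star_of_conj_le ht hwt h) ha)) s
    _ = (a * X) • (star s * (w * star w) * s) := by
        rw [smul_smul, mul_smul_comm, smul_mul_assoc]
    _ ≤ (a * X) • algebraMap ℝ A b :=
        smul_le_smul_of_nonneg_left (star_conj_mul_star_le_of_mul_star_le ht htw hb hs)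
          (mul_nonneg ha hX)
    _ = algebraMap ℝ A (a * b * X) := by
        rw [Algebra.smul_def, ← map_mul, mul_right_comm]

end CStarAlgebra

theorem smul_add_one_sub_smul_le_add {M : Type*} [AddCommGroup M] [PartialOrder M]
    [IsOrderedAddMonoid M] [Module ℝ M] [PosSMulMono ℝ M] {a b : M} (ha : 0 ≤ a) (hb : 0 ≤ b)
    {θ : ℝ} (hθ₀ : 0 ≤ θ) (hθ₁ : θ ≤ 1) : θ • a + (1 - θ) • b ≤ a + b :=
  add_le_add (smul_le_of_le_one_left ha hθ₁) (smul_le_of_le_one_left hb (by linarith))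

open scoped MatrixOrder Matrix.Norms.L2Operator

namespace Matrix

variable {n : Type*} [Fintype n] [DecidableEq n]

theorem PosSemidef.sqrt_eq_cfcSqrt {A : Matrix n n ℂ} (hA : A.PosSemidef) :
    hA.sqrt = CFC.sqrt A := by
  rw [CFC.sqrt_eq_cfc, cfc_nnreal_eq_real _ A, hA.1.cfc_eq]
  simp only [IsHermitian.cfc, Unitary.conjStarAlgAut_apply, PosSemidef.sqrt, Real.coe_sqrt,
    Real.coe_toNNReal', Function.comp_def]
  congr 4 with i
  rw [max_eq_left (hA.eigenvalues_nonneg i)]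

theorem le_algebraMap_iff_posSemidef (r : ℝ) (A : Matrix n n ℂ) :
    A ≤ algebraMap ℝ _ r ↔ ((r : ℂ) • 1 - A).PosSemidef := by
  rw [le_iff, Algebra.algebraMap_eq_smul_one, Complex.coe_smul]

theorem ofReal_smul_add_le_two_smul_of_eq_midpoint {A B M : Matrix n n ℂ} (hA : A.PosSemidef)
    (hB : B.PosSemidef) (hM : M = (1 / 2 : ℂ) • (A + B)) {θ : ℝ} (hθ₀ : 0 ≤ θ) (hθ₁ : θ ≤ 1) :
    (θ : ℂ) • A + ((1 - θ : ℝ) : ℂ) • B ≤ (2 : ℝ) • M := by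
  have hM₂ : (2 : ℝ) • M = A + B := by
    rw [hM, ← Complex.coe_smul, smul_smul]
    norm_num
  simpa only [hM₂, Complex.coe_smul] using
    smul_add_one_sub_smul_le_add hA.nonneg hB.nonneg hθ₀ hθ₁

end Matrix

theorem stmt_11_general {d : ℕ} (X : ℝ) (hX : 1 ≤ X)
    (U V Up Vp Um Vm : Matrix (Fin d) (Fin d) ℂ)
    (hV : V.PosDef) (hUp : Up.PosDef) (hVp : Vp.PosDef)
    (hUm : Um.PosDef) (hVm : Vm.PosDef)
    (hmidU : U = (1 / 2 : ℂ) • (Up + Um)) (hmidV : V = (1 / 2 : ℂ) • (Vp + Vm))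
    (h : ((X : ℂ) • (1 : Matrix (Fin d) (Fin d) ℂ) -
        hV.posSemidef.sqrt * U * hV.posSemidef.sqrt).PosSemidef) :
    ∀ θ : ℝ, 0 ≤ θ → θ ≤ 1 →
      ∀ S : Matrix (Fin d) (Fin d) ℂ, S.PosSemidef →
        S * S = (θ : ℂ) • Vp + ((1 - θ : ℝ) : ℂ) • Vm →
        (((4 * X : ℝ) : ℂ) • (1 : Matrix (Fin d) (Fin d) ℂ) -
          S * ((θ : ℂ) • Up + ((1 - θ : ℝ) : ℂ) • Um) * S).PosSemidef := by
  intro θ hθ₀ hθ₁ S hS hSS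
  rw [hV.posSemidef.sqrt_eq_cfcSqrt, ← Matrix.le_algebraMap_iff_posSemidef] at h
  set T := CFC.sqrt V
  have hT : IsUnit T := (CFC.isUnit_sqrt_iff V hV.posSemidef.nonneg).2 hV.isUnit
  have hTT : T * T = V := CFC.sqrt_mul_sqrt_self V hV.posSemidef.nonneg
  have hU₂ := Matrix.ofReal_smul_add_le_two_smul_of_eq_midpoint hUp.posSemidef hUm.posSemidef
    hmidU hθ₀ hθ₁
  have hS₂ : S * star S ≤ (2 : ℝ) • (T * T) := by
    rw [Matrix.star_eq_conjTranspose, hS.1.eq, hSS, hTT]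
    exact Matrix.ofReal_smul_add_le_two_smul_of_eq_midpoint hVp.posSemidef hVm.posSemidef
      hmidV hθ₀ hθ₁
  rw [show (4 : ℝ) * X = 2 * 2 * X by ring, ← Matrix.le_algebraMap_iff_posSemidef]
  simpa only [Matrix.star_eq_conjTranspose, hS.1.eq] using
    star_conj_le_algebraMap_of_le_smul (CFC.sqrt_nonneg V).isSelfAdjoint
      (Ring.inverse_mul_cancel T hT) (Ring.mul_inverse_cancel T hT) (by linarith) zero_le_two
      zero_le_two h hU₂ hS₂

theorem stmt_11 {d : ℕ} (X : ℝ) (hX : 1 ≤ X)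
    (U V Up Vp Um Vm : Matrix (Fin d) (Fin d) ℂ)
    (hU : U.PosDef) (hV : V.PosDef) (hUp : Up.PosDef) (hVp : Vp.PosDef)
    (hUm : Um.PosDef) (hVm : Vm.PosDef)
    (hmidU : U = (1 / 2 : ℂ) • (Up + Um)) (hmidV : V = (1 / 2 : ℂ) • (Vp + Vm))
    (hp : ((X : ℂ) • (1 : Matrix (Fin d) (Fin d) ℂ) -
        hVp.posSemidef.sqrt * Up * hVp.posSemidef.sqrt).PosSemidef)
    (hm : ((X : ℂ) • (1 : Matrix (Fin d) (Fin d) ℂ) -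
        hVm.posSemidef.sqrt * Um * hVm.posSemidef.sqrt).PosSemidef)
    (h : ((X : ℂ) • (1 : Matrix (Fin d) (Fin d) ℂ) -
        hV.posSemidef.sqrt * U * hV.posSemidef.sqrt).PosSemidef) :
    ∀ θ : ℝ, 0 ≤ θ → θ ≤ 1 →
      ∀ S : Matrix (Fin d) (Fin d) ℂ, S.PosSemidef →
        S * S = (θ : ℂ) • Vp + ((1 - θ : ℝ) : ℂ) • Vm →
        (((4 * X : ℝ) : ℂ) • (1 : Matrix (Fin d) (Fin d) ℂ) -
          S * ((θ : ℂ) • Up + ((1 - θ : ℝ) : ℂ) • Um) * S).PosSemidef :=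
  stmt_11_general X hX U V Up Vp Um Vm hV hUp hVp hUm hVm hmidU hmidV h
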